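/- Let A be a λ-mono-generated category in which the displayed colimits exist, D a λ-directed poset, and F₁, F₂ : D → A functors sending every morphism of D to a λ-embedding. Let η : F₁ → F₂ be a natural transformation with η(d) a λ-embedding for every d ∈ D. Then the induced morphism colim F₁ → colim F₂ is a λ-embedding. In particular: (i) if F : D → A sends all maps to λ-embeddings, then every component of the colimit cocone of F is a λ-embedding; and (ii) the subcategory λ-emb(A) of A, with the same objects and λ-embeddings as morphisms, has λ-directed colimits created by the inclusion into A whenever A has λ-directed colimits of monos. -/

import Mathlib

open CategoryTheory CategoryTheory.Limits

universe v u u'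

/-- A preorder `D` is `κ`-directed if every subset of cardinality `< κ` has an upper bound. -/
def IsLambdaDirected (κ : Cardinal.{v}) (D : Type v) [Preorder D] : Prop :=
  ∀ s : Set D, Cardinal.mk s < κ → ∃ d : D, ∀ x ∈ s, x ≤ d

/-- An object `X` is `κ`-generated if `hom(X,-)` preserves those `κ`-directed colimits of
monomorphisms that exist in the category. -/
def IsLambdaGenerated {C : Type u} [Category.{v} C] (κ : Cardinal.{v}) (X : C) : Prop :=
  ∀ (D : Type v) [Preorder D], IsLambdaDirected κ D →
    ∀ (F : D ⥤ C), (∀ {d d' : D} (f : d ⟶ d'), Mono (F.map f)) →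
    ∀ (c : Cocone F), IsColimit c →
      (∀ f : X ⟶ c.pt, ∃ (d : D) (g : X ⟶ F.obj d), g ≫ c.ι.app d = f) ∧
      (∀ (d : D) (g h : X ⟶ F.obj d), g ≫ c.ι.app d = h ≫ c.ι.app d →
        ∃ (d' : D) (e : d ⟶ d'), g ≫ F.map e = h ≫ F.map e)

/-- A witness exhibiting `X` as a `κ`-directed colimit of a diagram of monomorphisms
between `κ`-generated objects. -/
structure MonoGenWitness {C : Type u} [Category.{v} C] (κ : Cardinal.{v}) (X : C) where
  D : Type v
  [instD : Preorder D]
  directed : IsLambdaDirected κ D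
  F : D ⥤ C
  monoMaps : ∀ {d d' : D} (f : d ⟶ d'), Mono (F.map f)
  gen : ∀ d : D, IsLambdaGenerated κ (F.obj d)
  cocone : Cocone F
  isColimit : IsColimit cocone
  iso : cocone.pt ≅ X

/-- A category is `κ`-mono-generated if every object is a `κ`-directed colimit of a diagram
of monomorphisms between `κ`-generated objects. -/
def LambdaMonoGenerated (κ : Cardinal.{v}) (C : Type u) [Category.{v} C] : Prop :=
  ∀ X : C, Nonempty (MonoGenWitness κ X)

/-- A span `X ↢ U ↣ Y` with both legs monomorphisms. -/
structure MonoSpan {C : Type u} [Category.{v} C] (X Y : C) where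
  U : C
  l : U ⟶ X
  r : U ⟶ Y
  monoL : Mono l
  monoR : Mono r

/-- A set of spans is `κ`-dense if it is nonempty and satisfies the back and forth
extension properties with respect to monomorphisms from `κ`-generated objects. -/
def IsLambdaDense {C : Type u} [Category.{v} C] (κ : Cardinal.{v}) {X Y : C}
    (S : Set (MonoSpan X Y)) : Prop :=
  S.Nonempty ∧
  (∀ s ∈ S, ∀ (G : C) (g : G ⟶ X), Mono g → IsLambdaGenerated κ G →
    ∃ s' ∈ S, ∃ (t : G ⟶ s'.U) (m : s.U ⟶ s'.U),
      t ≫ s'.l = g ∧ m ≫ s'.l = s.l ∧ m ≫ s'.r = s.r) ∧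
  (∀ s ∈ S, ∀ (G : C) (g : G ⟶ Y), Mono g → IsLambdaGenerated κ G →
    ∃ s' ∈ S, ∃ (t : G ⟶ s'.U) (m : s.U ⟶ s'.U),
      t ≫ s'.r = g ∧ m ≫ s'.l = s.l ∧ m ≫ s'.r = s.r)

/-- `X ∼_κ Y` : there exists a `κ`-dense set of spans between `X` and `Y`. -/
def LambdaEquiv {C : Type u} [Category.{v} C] (κ : Cardinal.{v}) (X Y : C) : Prop :=
  ∃ S : Set (MonoSpan X Y), IsLambdaDense κ S

/-- `f : X ⟶ Y` is a `κ`-embedding if some `κ`-dense set of spans witnesses it. -/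
def IsLambdaEmbedding {C : Type u} [Category.{v} C] (κ : Cardinal.{v}) {X Y : C}
    (f : X ⟶ Y) : Prop :=
  ∃ S : Set (MonoSpan X Y), IsLambdaDense κ S ∧
    ∀ (G : C) (g : G ⟶ X), Mono g → IsLambdaGenerated κ G →
      ∃ s ∈ S, ∃ t : G ⟶ s.U, t ≫ s.l = g ∧ t ≫ s.r = g ≫ f

section Aux

variable {C : Type u} [Category.{v} C] {κ : Cardinal.{v}}

lemma IsLambdaDirected.nonempty' {D : Type v} [Preorder D] (hκ : Cardinal.aleph0 ≤ κ)
    (hD : IsLambdaDirected κ D) : Nonempty D := by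
  obtain ⟨d, -⟩ := hD ∅ (by
    simp only [Cardinal.mk_eq_zero]
    exact lt_of_lt_of_le Cardinal.aleph0_pos hκ)
  exact ⟨d⟩

lemma IsLambdaDirected.pair {D : Type v} [Preorder D] (hκ : Cardinal.aleph0 ≤ κ)
    (hD : IsLambdaDirected κ D) (x y : D) : ∃ z, x ≤ z ∧ y ≤ z := by
  obtain ⟨z, hz⟩ := hD {x, y} (lt_of_lt_of_le (Set.toFinite _).lt_aleph0 hκ)
  exact ⟨z, hz x (by simp), hz y (by simp)⟩

/-- The cocone of a witness, transported to have apex `X` itself. -/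
noncomputable def MonoGenWitness.cocone' {X : C} (w : MonoGenWitness κ X) :
    letI := w.instD; Cocone w.F :=
  letI := w.instD
  { pt := X
    ι := { app := fun e => w.cocone.ι.app e ≫ w.iso.hom
           naturality := by
             intro e e' f
             simp only [Functor.const_obj_obj, Functor.const_obj_map, Category.comp_id,
               ← Category.assoc]
             rw [w.cocone.w f] } }

noncomputable def MonoGenWitness.isColimit' {X : C} (w : MonoGenWitness κ X) :
    letI := w.instD; IsColimit w.cocone' :=
  letI := w.instD
  w.isColimit.ofIsoColimit (Cocones.ext w.iso (fun _ => rfl))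

attribute [reducible] MonoGenWitness.cocone'

lemma mono_colimit_leg (hC : LambdaMonoGenerated κ C) {D : Type v} [Preorder D]
    (hD : IsLambdaDirected κ D) (F : D ⥤ C) (hF : ∀ {d d' : D} (f : d ⟶ d'), Mono (F.map f))
    {c : Cocone F} (hc : IsColimit c) (d : D) : Mono (c.ι.app d) := by
  constructor
  intro Z a b hab
  obtain ⟨w⟩ := hC Z
  letI := w.instD
  apply w.isColimit'.hom_ext
  intro e
  obtain ⟨d', e', he'⟩ := (w.gen e D hD F (fun f => hF f) c hc).2 d
    (w.cocone'.ι.app e ≫ a) (w.cocone'.ι.app e ≫ b)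
    (by simp only [Category.assoc, hab])
  haveI := hF e'
  have := (cancel_mono (F.map e')).1 he'
  simpa using this

lemma amalgamate (hκ : Cardinal.aleph0 ≤ κ) (hC : LambdaMonoGenerated κ C)
    {X G₁ G₂ : C} (h₁ : IsLambdaGenerated κ G₁) (h₂ : IsLambdaGenerated κ G₂)
    (p : G₁ ⟶ X) (q : G₂ ⟶ X) :
    ∃ (V : C) (v : V ⟶ X) (a : G₁ ⟶ V) (b : G₂ ⟶ V),
      Mono v ∧ IsLambdaGenerated κ V ∧ a ≫ v = p ∧ b ≫ v = q := by
  obtain ⟨w⟩ := hC X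
  letI := w.instD
  obtain ⟨e₁, a₁, ha₁⟩ :=
    (h₁ w.D w.directed w.F (fun f => w.monoMaps f) w.cocone' w.isColimit').1 p
  obtain ⟨e₂, b₁, hb₁⟩ :=
    (h₂ w.D w.directed w.F (fun f => w.monoMaps f) w.cocone' w.isColimit').1 q
  obtain ⟨e₃, he₁, he₂⟩ := w.directed.pair hκ e₁ e₂
  refine ⟨w.F.obj e₃, w.cocone'.ι.app e₃, a₁ ≫ w.F.map (homOfLE he₁),
    b₁ ≫ w.F.map (homOfLE he₂),
    mono_colimit_leg hC w.directed w.F (fun f => w.monoMaps f) w.isColimit' e₃,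
    w.gen e₃, ?_, ?_⟩
  · rw [Category.assoc, w.cocone'.w (homOfLE he₁), ha₁]
  · rw [Category.assoc, w.cocone'.w (homOfLE he₂), hb₁]

lemma exists_gen_mono (hκ : Cardinal.aleph0 ≤ κ) (hC : LambdaMonoGenerated κ C) (X : C) :
    ∃ (G : C) (g : G ⟶ X), Mono g ∧ IsLambdaGenerated κ G := by
  obtain ⟨w⟩ := hC X
  letI := w.instD
  obtain ⟨e⟩ := w.directed.nonempty' hκ
  exact ⟨w.F.obj e, w.cocone'.ι.app e,
    mono_colimit_leg hC w.directed w.F (fun f => w.monoMaps f) w.isColimit' e, w.gen e⟩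

lemma embedding_mono (hκ : Cardinal.aleph0 ≤ κ) (hC : LambdaMonoGenerated κ C)
    {X Y : C} {f : X ⟶ Y} (hf : IsLambdaEmbedding κ f) : Mono f := by
  obtain ⟨S, _, hSf⟩ := hf
  constructor
  intro Z a b hab
  obtain ⟨wz⟩ := hC Z
  letI := wz.instD
  apply wz.isColimit'.hom_ext
  intro e
  obtain ⟨wx⟩ := hC X
  letI := wx.instD
  obtain ⟨d₁, p₁, hp₁⟩ :=
    (wz.gen e wx.D wx.directed wx.F (fun g => wx.monoMaps g) wx.cocone' wx.isColimit').1
      (wz.cocone'.ι.app e ≫ a)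
  obtain ⟨d₂, q₁, hq₁⟩ :=
    (wz.gen e wx.D wx.directed wx.F (fun g => wx.monoMaps g) wx.cocone' wx.isColimit').1
      (wz.cocone'.ι.app e ≫ b)
  obtain ⟨d₃, h₁, h₂⟩ := wx.directed.pair hκ d₁ d₂
  set g : wx.F.obj d₃ ⟶ X := wx.cocone'.ι.app d₃ with hg
  have hgm : Mono g := mono_colimit_leg hC wx.directed wx.F (fun g => wx.monoMaps g)
    wx.isColimit' d₃
  obtain ⟨s, hs, t, ht1, ht2⟩ := hSf _ g hgm (wx.gen d₃)
  set p₂ : wz.F.obj e ⟶ wx.F.obj d₃ := p₁ ≫ wx.F.map (homOfLE h₁) with hp₂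
  set q₂ : wz.F.obj e ⟶ wx.F.obj d₃ := q₁ ≫ wx.F.map (homOfLE h₂) with hq₂
  have hp : p₂ ≫ g = wz.cocone'.ι.app e ≫ a := by
    rw [hp₂, Category.assoc, hg, wx.cocone'.w (homOfLE h₁), hp₁]
  have hq : q₂ ≫ g = wz.cocone'.ι.app e ≫ b := by
    rw [hq₂, Category.assoc, hg, wx.cocone'.w (homOfLE h₂), hq₁]
  have key : (p₂ ≫ t) ≫ s.r = (q₂ ≫ t) ≫ s.r := by
    simp only [Category.assoc, ht2]
    rw [reassoc_of% hp, reassoc_of% hq, hab]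
  haveI := s.monoR
  have heq : p₂ ≫ t = q₂ ≫ t := (cancel_mono s.r).1 key
  have : p₂ ≫ g = q₂ ≫ g := by
    rw [← ht1, ← Category.assoc, ← Category.assoc, heq]
  rw [← hp, ← hq, this]

end Aux
section Aux2

variable {C : Type u} [Category.{v} C] {κ : Cardinal.{v}}

/-- The union of all `κ`-dense sets of spans between `X` and `Y`. -/
def Smax (κ : Cardinal.{v}) (X Y : C) : Set (MonoSpan X Y) :=
  { s | ∃ S : Set (MonoSpan X Y), IsLambdaDense κ S ∧ s ∈ S }

lemma dense_subset_smax {X Y : C} {S : Set (MonoSpan X Y)} (hS : IsLambdaDense κ S) :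
    S ⊆ Smax κ X Y := fun s hs => ⟨S, hS, hs⟩

lemma smax_dense {X Y : C} (h : LambdaEquiv κ X Y) : IsLambdaDense κ (Smax κ X Y) := by
  obtain ⟨S, hS⟩ := h
  obtain ⟨s₀, hs₀⟩ := hS.1
  refine ⟨⟨s₀, S, hS, hs₀⟩, ?_, ?_⟩
  · rintro s ⟨S', hS', hsS'⟩ G g hg hgen
    obtain ⟨s', hs', t, m, h1, h2, h3⟩ := hS'.2.1 s hsS' G g hg hgen
    exact ⟨s', ⟨S', hS', hs'⟩, t, m, h1, h2, h3⟩
  · rintro s ⟨S', hS', hsS'⟩ G g hg hgen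
    obtain ⟨s', hs', t, m, h1, h2, h3⟩ := hS'.2.2 s hsS' G g hg hgen
    exact ⟨s', ⟨S', hS', hs'⟩, t, m, h1, h2, h3⟩

/-- λ-generated sub-spans of spans in `S`. -/
def SubG (κ : Cardinal.{v}) {X Y : C} (S : Set (MonoSpan X Y)) : Set (MonoSpan X Y) :=
  { s | IsLambdaGenerated κ s.U ∧
    ∃ sb ∈ S, ∃ j : s.U ⟶ sb.U, j ≫ sb.l = s.l ∧ j ≫ sb.r = s.r }

lemma subG_dense (hκ : Cardinal.aleph0 ≤ κ) (hC : LambdaMonoGenerated κ C)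
    {X Y : C} {S : Set (MonoSpan X Y)} (hS : IsLambdaDense κ S) :
    IsLambdaDense κ (SubG κ S) := by
  refine ⟨?_, ?_, ?_⟩
  · obtain ⟨s, hs⟩ := hS.1
    obtain ⟨w⟩ := hC s.U
    letI := w.instD
    obtain ⟨e⟩ := w.directed.nonempty' hκ
    have hk : Mono (w.cocone'.ι.app e) :=
      mono_colimit_leg hC w.directed w.F (fun f => w.monoMaps f) w.isColimit' e
    haveI := hk; haveI := s.monoL; haveI := s.monoR
    exact ⟨⟨w.F.obj e, w.cocone'.ι.app e ≫ s.l, w.cocone'.ι.app e ≫ s.r,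
      inferInstance, inferInstance⟩, w.gen e, s, hs, w.cocone'.ι.app e, rfl, rfl⟩
  · rintro s ⟨hgU, sb, hsb, j, hj1, hj2⟩ G g hg hgen
    obtain ⟨sb', hsb', t, m, ht, hm1, hm2⟩ := hS.2.1 sb hsb G g hg hgen
    obtain ⟨V, v, a, b, hv, hVg, hav, hbv⟩ := amalgamate hκ hC hgU hgen (j ≫ m) t
    haveI := hv; haveI := sb'.monoL; haveI := sb'.monoR
    refine ⟨⟨V, v ≫ sb'.l, v ≫ sb'.r, inferInstance, inferInstance⟩,
      ⟨hVg, sb', hsb', v, rfl, rfl⟩, b, a, ?_, ?_, ?_⟩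
    · rw [← Category.assoc, hbv, ht]
    · show a ≫ v ≫ sb'.l = s.l
      rw [← Category.assoc, hav, Category.assoc, hm1, hj1]
    · show a ≫ v ≫ sb'.r = s.r
      rw [← Category.assoc, hav, Category.assoc, hm2, hj2]
  · rintro s ⟨hgU, sb, hsb, j, hj1, hj2⟩ G g hg hgen
    obtain ⟨sb', hsb', t, m, ht, hm1, hm2⟩ := hS.2.2 sb hsb G g hg hgen
    obtain ⟨V, v, a, b, hv, hVg, hav, hbv⟩ := amalgamate hκ hC hgU hgen (j ≫ m) t
    haveI := hv; haveI := sb'.monoL; haveI := sb'.monoR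
    refine ⟨⟨V, v ≫ sb'.l, v ≫ sb'.r, inferInstance, inferInstance⟩,
      ⟨hVg, sb', hsb', v, rfl, rfl⟩, b, a, ?_, ?_, ?_⟩
    · rw [← Category.assoc, hbv, ht]
    · show a ≫ v ≫ sb'.l = s.l
      rw [← Category.assoc, hav, Category.assoc, hm1, hj1]
    · show a ≫ v ≫ sb'.r = s.r
      rw [← Category.assoc, hav, Category.assoc, hm2, hj2]

lemma subG_gen {X Y : C} {S : Set (MonoSpan X Y)} :
    ∀ s ∈ SubG κ S, IsLambdaGenerated κ s.U := fun _ hs => hs.1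

/-- Graph spans of an embedding lie in a dense set of λ-generated-apex spans. -/
lemma graph_mem (hκ : Cardinal.aleph0 ≤ κ) (hC : LambdaMonoGenerated κ C)
    {X Y : C} {f : X ⟶ Y} (hf : IsLambdaEmbedding κ f) {G : C} (g : G ⟶ X)
    (hg : Mono g) (hgen : IsLambdaGenerated κ G) (hgf : Mono (g ≫ f)) :
    ∃ T : Set (MonoSpan X Y), IsLambdaDense κ T ∧ (∀ s ∈ T, IsLambdaGenerated κ s.U) ∧
      (MonoSpan.mk G g (g ≫ f) hg hgf) ∈ T := by
  obtain ⟨W, hWd, hWf⟩ := hf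
  obtain ⟨sb, hsb, t, ht1, ht2⟩ := hWf G g hg hgen
  exact ⟨SubG κ W, subG_dense hκ hC hWd, subG_gen, hgen, sb, hsb, t, ht1, ht2⟩

/-- Reversal of a span. -/
def MonoSpan.rev {X Y : C} (s : MonoSpan X Y) : MonoSpan Y X :=
  ⟨s.U, s.r, s.l, s.monoR, s.monoL⟩

lemma rev_dense {X Y : C} {S : Set (MonoSpan X Y)} (hS : IsLambdaDense κ S) :
    IsLambdaDense κ (MonoSpan.rev '' S) := by
  refine ⟨?_, ?_, ?_⟩
  · obtain ⟨s, hs⟩ := hS.1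
    exact ⟨s.rev, s, hs, rfl⟩
  · rintro s ⟨s₀, hs₀, rfl⟩ G g hg hgen
    obtain ⟨s', hs', t, m, h1, h2, h3⟩ := hS.2.2 s₀ hs₀ G g hg hgen
    exact ⟨s'.rev, ⟨s', hs', rfl⟩, t, m, h1, h3, h2⟩
  · rintro s ⟨s₀, hs₀, rfl⟩ G g hg hgen
    obtain ⟨s', hs', t, m, h1, h2, h3⟩ := hS.2.1 s₀ hs₀ G g hg hgen
    exact ⟨s'.rev, ⟨s', hs', rfl⟩, t, m, h1, h3, h2⟩

lemma rev_gen {X Y : C} {S : Set (MonoSpan X Y)} (h : ∀ s ∈ S, IsLambdaGenerated κ s.U) :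
    ∀ s ∈ MonoSpan.rev '' S, IsLambdaGenerated κ s.U := by
  rintro s ⟨s₀, hs₀, rfl⟩
  exact h s₀ hs₀

/-- Composition of span-sets (with λ-generated apex). -/
def CompG (κ : Cardinal.{v}) {X Y Z : C} (S₁ : Set (MonoSpan X Y)) (S₂ : Set (MonoSpan Y Z)) :
    Set (MonoSpan X Z) :=
  { s | IsLambdaGenerated κ s.U ∧ ∃ s₁ ∈ S₁, ∃ s₂ ∈ S₂,
      ∃ (p : s.U ⟶ s₁.U) (q : s.U ⟶ s₂.U),
        p ≫ s₁.l = s.l ∧ q ≫ s₂.r = s.r ∧ p ≫ s₁.r = q ≫ s₂.l }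

lemma compG_gen {X Y Z : C} {S₁ : Set (MonoSpan X Y)} {S₂ : Set (MonoSpan Y Z)} :
    ∀ s ∈ CompG κ S₁ S₂, IsLambdaGenerated κ s.U := fun _ hs => hs.1

lemma compG_dense {X Y Z : C} {S₁ : Set (MonoSpan X Y)} {S₂ : Set (MonoSpan Y Z)}
    (h₁ : IsLambdaDense κ S₁) (h₂ : IsLambdaDense κ S₂)
    (g₁ : ∀ s ∈ S₁, IsLambdaGenerated κ s.U) (g₂ : ∀ s ∈ S₂, IsLambdaGenerated κ s.U) :
    IsLambdaDense κ (CompG κ S₁ S₂) := by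
  refine ⟨?_, ?_, ?_⟩
  · obtain ⟨s₁, hs₁⟩ := h₁.1
    obtain ⟨s₂₀, hs₂₀⟩ := h₂.1
    haveI := s₁.monoR
    obtain ⟨s₂, hs₂, t₂, m₂, ht₂, -, -⟩ := h₂.2.1 s₂₀ hs₂₀ s₁.U s₁.r s₁.monoR (g₁ s₁ hs₁)
    haveI : Mono (t₂ ≫ s₂.l) := ht₂ ▸ s₁.monoR
    haveI : Mono t₂ := mono_of_mono t₂ s₂.l
    haveI := s₂.monoR; haveI := s₁.monoL
    refine ⟨⟨s₁.U, s₁.l, t₂ ≫ s₂.r, s₁.monoL, inferInstance⟩, g₁ s₁ hs₁,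
      s₁, hs₁, s₂, hs₂, 𝟙 _, t₂, Category.id_comp _, rfl, by rw [Category.id_comp, ht₂]⟩
  · rintro s ⟨hgen, s₁, hs₁, s₂, hs₂, p, q, hp, hq, hpq⟩ G g hg hgenG
    obtain ⟨s₁', hs₁', t, m₁, ht, hm₁l, hm₁r⟩ := h₁.2.1 s₁ hs₁ G g hg hgenG
    haveI := s₁'.monoR
    obtain ⟨s₂', hs₂', t₂, m₂, ht₂, hm₂l, hm₂r⟩ :=
      h₂.2.1 s₂ hs₂ s₁'.U s₁'.r s₁'.monoR (g₁ s₁' hs₁')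
    haveI : Mono (t₂ ≫ s₂'.l) := ht₂ ▸ s₁'.monoR
    haveI : Mono t₂ := mono_of_mono t₂ s₂'.l
    haveI := s₂'.monoR
    have hmid : (p ≫ m₁) ≫ t₂ = q ≫ m₂ := by
      haveI := s₂'.monoL
      apply (cancel_mono s₂'.l).1
      simp only [Category.assoc, ht₂, hm₂l, hm₁r]
      exact hpq
    refine ⟨⟨s₁'.U, s₁'.l, t₂ ≫ s₂'.r, s₁'.monoL, inferInstance⟩,
      ⟨g₁ s₁' hs₁', s₁', hs₁', s₂', hs₂', 𝟙 _, t₂, Category.id_comp _, rfl,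
        by rw [Category.id_comp, ht₂]⟩, t, p ≫ m₁, ht, ?_, ?_⟩
    · show (p ≫ m₁) ≫ s₁'.l = s.l
      rw [Category.assoc, hm₁l, hp]
    · show (p ≫ m₁) ≫ t₂ ≫ s₂'.r = s.r
      rw [← Category.assoc, hmid, Category.assoc, hm₂r, hq]
  · rintro s ⟨hgen, s₁, hs₁, s₂, hs₂, p, q, hp, hq, hpq⟩ G g hg hgenG
    obtain ⟨s₂', hs₂', t, m₂, ht, hm₂l, hm₂r⟩ := h₂.2.2 s₂ hs₂ G g hg hgenG
    haveI := s₂'.monoL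
    obtain ⟨s₁', hs₁', t₁, m₁, ht₁, hm₁l, hm₁r⟩ :=
      h₁.2.2 s₁ hs₁ s₂'.U s₂'.l s₂'.monoL (g₂ s₂' hs₂')
    haveI : Mono (t₁ ≫ s₁'.r) := ht₁ ▸ s₂'.monoL
    haveI : Mono t₁ := mono_of_mono t₁ s₁'.r
    haveI := s₁'.monoL
    have hmid : (q ≫ m₂) ≫ t₁ = p ≫ m₁ := by
      haveI := s₁'.monoR
      apply (cancel_mono s₁'.r).1
      simp only [Category.assoc, ht₁, hm₂l, hm₁r]
      exact hpq.symm
    refine ⟨⟨s₂'.U, t₁ ≫ s₁'.l, s₂'.r, inferInstance, s₂'.monoR⟩,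
      ⟨g₂ s₂' hs₂', s₁', hs₁', s₂', hs₂', t₁, 𝟙 _, rfl, Category.id_comp _,
        by rw [Category.id_comp, ht₁]⟩, t, q ≫ m₂, ht, ?_, ?_⟩
    · show (q ≫ m₂) ≫ t₁ ≫ s₁'.l = s.l
      rw [← Category.assoc, hmid, Category.assoc, hm₁l, hp]
    · show (q ≫ m₂) ≫ s₂'.r = s.r
      rw [Category.assoc, hm₂r, hq]

end Aux2
section Aux3

variable {C : Type u} [Category.{v} C] {κ : Cardinal.{v}}

/-- Key lemma: pushing a span from a dense set of λ-generated-apex spans forward along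
λ-embeddings lands in the maximal dense set. -/
lemma pushforward_mem_smax (hκ : Cardinal.aleph0 ≤ κ) (hC : LambdaMonoGenerated κ C)
    {X Y X₀ Y₀ : C} {u : X ⟶ X₀} {v : Y ⟶ Y₀}
    (hu : IsLambdaEmbedding κ u) (hv : IsLambdaEmbedding κ v)
    {S : Set (MonoSpan X Y)} (hS : IsLambdaDense κ S)
    (hSg : ∀ s ∈ S, IsLambdaGenerated κ s.U)
    {s₀ : MonoSpan X Y} (hs₀ : s₀ ∈ S)
    (hl : Mono (s₀.l ≫ u)) (hr : Mono (s₀.r ≫ v)) :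
    (MonoSpan.mk s₀.U (s₀.l ≫ u) (s₀.r ≫ v) hl hr) ∈ Smax κ X₀ Y₀ := by
  obtain ⟨Tu, hTud, hTug, hTu⟩ := graph_mem hκ hC hu s₀.l s₀.monoL (hSg s₀ hs₀) hl
  obtain ⟨Tv, hTvd, hTvg, hTv⟩ := graph_mem hκ hC hv s₀.r s₀.monoR (hSg s₀ hs₀) hr
  set M : Set (MonoSpan X₀ Y) := CompG κ (MonoSpan.rev '' Tu) S with hM
  have hMd : IsLambdaDense κ M := compG_dense (rev_dense hTud) hS (rev_gen hTug) hSg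
  set T : Set (MonoSpan X₀ Y₀) := CompG κ M Tv with hT
  have hTd : IsLambdaDense κ T := compG_dense hMd hTvd compG_gen hTvg
  have hmid : (MonoSpan.mk s₀.U (s₀.l ≫ u) s₀.r hl s₀.monoR) ∈ M := by
    refine ⟨hSg s₀ hs₀, (MonoSpan.mk s₀.U s₀.l (s₀.l ≫ u) s₀.monoL hl).rev,
      ⟨_, hTu, rfl⟩, s₀, hs₀, 𝟙 _, 𝟙 _, Category.id_comp _, Category.id_comp _, ?_⟩
    simp [MonoSpan.rev]
  refine ⟨T, hTd, ?_⟩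
  exact ⟨hSg s₀ hs₀, _, hmid, _, hTv, 𝟙 _, 𝟙 _, Category.id_comp _, Category.id_comp _,
    by simp⟩

lemma id_embedding (hκ : Cardinal.aleph0 ≤ κ) (hC : LambdaMonoGenerated κ C) (X : C) :
    IsLambdaEmbedding κ (𝟙 X) := by
  refine ⟨{ s | ∃ (G : C) (g : G ⟶ X) (hg : Mono g),
      IsLambdaGenerated κ G ∧ s = MonoSpan.mk G g g hg hg }, ⟨?_, ?_, ?_⟩, ?_⟩
  · obtain ⟨G, g, hg, hgen⟩ := exists_gen_mono hκ hC X
    exact ⟨MonoSpan.mk G g g hg hg, G, g, hg, hgen, rfl⟩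
  · rintro s ⟨G, g, hg, hgen, rfl⟩ G' g' hg' hgen'
    obtain ⟨V, w, a, b, hw, hVg, haw, hbw⟩ := amalgamate hκ hC hgen hgen' g g'
    exact ⟨MonoSpan.mk V w w hw hw, ⟨V, w, hw, hVg, rfl⟩, b, a, hbw, haw, haw⟩
  · rintro s ⟨G, g, hg, hgen, rfl⟩ G' g' hg' hgen'
    obtain ⟨V, w, a, b, hw, hVg, haw, hbw⟩ := amalgamate hκ hC hgen hgen' g g'
    exact ⟨MonoSpan.mk V w w hw hw, ⟨V, w, hw, hVg, rfl⟩, b, a, hbw, haw, haw⟩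
  · intro G g hg hgen
    exact ⟨MonoSpan.mk G g g hg hg, ⟨G, g, hg, hgen, rfl⟩, 𝟙 G,
      Category.id_comp _, by simp⟩

/-- The constant cocone over a constant functor. -/
def constCocone (D : Type v) [Preorder D] (X : C) : Cocone ((Functor.const D).obj X) where
  pt := X
  ι := { app := fun _ => 𝟙 X
         naturality := by intros; simp }

def constIsColimit {D : Type v} [Preorder D] {X : C} (d₀ : D)
    (bd : ∀ x y : D, ∃ z, x ≤ z ∧ y ≤ z) : IsColimit (_root_.constCocone D X) where
  desc s := s.ι.app d₀
  fac s j := by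
    obtain ⟨z, hj, h₀⟩ := bd j d₀
    have e1 : s.ι.app j = s.ι.app z := by
      have := s.w (homOfLE hj); simpa using this.symm
    have e2 : s.ι.app d₀ = s.ι.app z := by
      have := s.w (homOfLE h₀); simpa using this.symm
    simp [_root_.constCocone, e1, e2]
  uniq s m h := by
    have := h d₀
    exact (Category.id_comp m).symm.trans this

end Aux3
section Aux4

variable {C : Type u} [Category.{v} C] {κ : Cardinal.{v}}

lemma colimit_map_embedding (hκr : κ.IsRegular) (hC : LambdaMonoGenerated κ C)
    {D : Type v} [Preorder D] (hD : IsLambdaDirected κ D)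
    (F₁ F₂ : D ⥤ C)
    (h₁ : ∀ {d d' : D} (f : d ⟶ d'), IsLambdaEmbedding κ (F₁.map f))
    (h₂ : ∀ {d d' : D} (f : d ⟶ d'), IsLambdaEmbedding κ (F₂.map f))
    (η : F₁ ⟶ F₂) (hη : ∀ d : D, IsLambdaEmbedding κ (η.app d))
    (c₁ : Cocone F₁) (hc₁ : IsColimit c₁) (c₂ : Cocone F₂) (hc₂ : IsColimit c₂) :
    IsLambdaEmbedding κ (hc₁.map c₂ η) := by
  have hκ : Cardinal.aleph0 ≤ κ := hκr.aleph0_le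
  have m₁ : ∀ {d d' : D} (f : d ⟶ d'), Mono (F₁.map f) :=
    fun f => embedding_mono hκ hC (h₁ f)
  have m₂ : ∀ {d d' : D} (f : d ⟶ d'), Mono (F₂.map f) :=
    fun f => embedding_mono hκ hC (h₂ f)
  have mη : ∀ d : D, Mono (η.app d) := fun d => embedding_mono hκ hC (hη d)
  have ι₁ : ∀ d : D, Mono (c₁.ι.app d) :=
    fun d => mono_colimit_leg hC hD F₁ (fun f => m₁ f) hc₁ d
  have ι₂ : ∀ d : D, Mono (c₂.ι.app d) :=
    fun d => mono_colimit_leg hC hD F₂ (fun f => m₂ f) hc₂ d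
  have equiv_d : ∀ d : D, LambdaEquiv κ (F₁.obj d) (F₂.obj d) := by
    intro d
    obtain ⟨S, hS, -⟩ := hη d
    exact ⟨S, hS⟩
  set Mg : ∀ d : D, Set (MonoSpan (F₁.obj d) (F₂.obj d)) :=
    fun d => SubG κ (Smax κ (F₁.obj d) (F₂.obj d)) with hMgdef
  have hMgd : ∀ d, IsLambdaDense κ (Mg d) :=
    fun d => subG_dense hκ hC (smax_dense (equiv_d d))
  have mem_Mg : ∀ (d : D) (s : MonoSpan (F₁.obj d) (F₂.obj d)),
      s ∈ Smax κ (F₁.obj d) (F₂.obj d) → IsLambdaGenerated κ s.U → s ∈ Mg d :=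
    fun d s hs hg => ⟨hg, s, hs, 𝟙 s.U, Category.id_comp _, Category.id_comp _⟩
  -- lifting spans to the colimit
  let L : ∀ d : D, MonoSpan (F₁.obj d) (F₂.obj d) → MonoSpan c₁.pt c₂.pt := fun d s =>
    MonoSpan.mk s.U (s.l ≫ c₁.ι.app d) (s.r ≫ c₂.ι.app d)
      (by haveI := s.monoL; haveI := ι₁ d; infer_instance)
      (by haveI := s.monoR; haveI := ι₂ d; infer_instance)
  set S : Set (MonoSpan c₁.pt c₂.pt) :=
    { t | ∃ (d : D) (s : MonoSpan (F₁.obj d) (F₂.obj d)), s ∈ Mg d ∧ t = L d s } with hSdef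
  -- pushforward of Mg-spans along the transition maps
  have push : ∀ {d d' : D} (h : d ≤ d') (s : MonoSpan (F₁.obj d) (F₂.obj d)), s ∈ Mg d →
      (MonoSpan.mk s.U (s.l ≫ F₁.map (homOfLE h)) (s.r ≫ F₂.map (homOfLE h))
        (by haveI := s.monoL; haveI := m₁ (homOfLE h); infer_instance)
        (by haveI := s.monoR; haveI := m₂ (homOfLE h); infer_instance)) ∈ Mg d' := by
    intro d d' h s hs
    refine mem_Mg d' _ ?_ hs.1
    exact pushforward_mem_smax hκ hC (h₁ (homOfLE h)) (h₂ (homOfLE h)) (hMgd d)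
      (fun s hs => hs.1) hs _ _
  refine ⟨S, ⟨?_, ?_, ?_⟩, ?_⟩
  · -- nonempty
    obtain ⟨d₀⟩ := hD.nonempty' hκ
    obtain ⟨s, hs⟩ := (hMgd d₀).1
    exact ⟨L d₀ s, d₀, s, hs, rfl⟩
  · -- forth
    rintro t ⟨d, s₀, hs₀, rfl⟩ G g hg hgen
    obtain ⟨d₁, g', hg'⟩ := (hgen D hD F₁ (fun f => m₁ f) c₁ hc₁).1 g
    have hg'm : Mono g' := by
      haveI : Mono (g' ≫ c₁.ι.app d₁) := hg' ▸ hg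
      exact mono_of_mono g' (c₁.ι.app d₁)
    obtain ⟨d₂, hd, hd₁⟩ := hD.pair hκ d d₁
    have hs₁ := push hd s₀ hs₀
    have hg₂m : Mono (g' ≫ F₁.map (homOfLE hd₁)) := by
      haveI := hg'm; haveI := m₁ (homOfLE hd₁); infer_instance
    obtain ⟨s₂, hs₂, t₂, m₂', ht₂, hm₂l, hm₂r⟩ :=
      (hMgd d₂).2.1 _ hs₁ G (g' ≫ F₁.map (homOfLE hd₁)) hg₂m hgen
    refine ⟨L d₂ s₂, ⟨d₂, s₂, hs₂, rfl⟩, t₂, m₂', ?_, ?_, ?_⟩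
    · show t₂ ≫ s₂.l ≫ c₁.ι.app d₂ = g
      rw [← Category.assoc, ht₂, Category.assoc, c₁.w (homOfLE hd₁), hg']
    · show m₂' ≫ s₂.l ≫ c₁.ι.app d₂ = s₀.l ≫ c₁.ι.app d
      rw [← Category.assoc, hm₂l]
      show (s₀.l ≫ F₁.map (homOfLE hd)) ≫ c₁.ι.app d₂ = _
      rw [Category.assoc, c₁.w (homOfLE hd)]
    · show m₂' ≫ s₂.r ≫ c₂.ι.app d₂ = s₀.r ≫ c₂.ι.app d
      rw [← Category.assoc, hm₂r]
      show (s₀.r ≫ F₂.map (homOfLE hd)) ≫ c₂.ι.app d₂ = _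
      rw [Category.assoc, c₂.w (homOfLE hd)]
  · -- back
    rintro t ⟨d, s₀, hs₀, rfl⟩ G g hg hgen
    obtain ⟨d₁, g', hg'⟩ := (hgen D hD F₂ (fun f => m₂ f) c₂ hc₂).1 g
    have hg'm : Mono g' := by
      haveI : Mono (g' ≫ c₂.ι.app d₁) := hg' ▸ hg
      exact mono_of_mono g' (c₂.ι.app d₁)
    obtain ⟨d₂, hd, hd₁⟩ := hD.pair hκ d d₁
    have hs₁ := push hd s₀ hs₀
    have hg₂m : Mono (g' ≫ F₂.map (homOfLE hd₁)) := by
      haveI := hg'm; haveI := m₂ (homOfLE hd₁); infer_instance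
    obtain ⟨s₂, hs₂, t₂, m₂', ht₂, hm₂l, hm₂r⟩ :=
      (hMgd d₂).2.2 _ hs₁ G (g' ≫ F₂.map (homOfLE hd₁)) hg₂m hgen
    refine ⟨L d₂ s₂, ⟨d₂, s₂, hs₂, rfl⟩, t₂, m₂', ?_, ?_, ?_⟩
    · show t₂ ≫ s₂.r ≫ c₂.ι.app d₂ = g
      rw [← Category.assoc, ht₂, Category.assoc, c₂.w (homOfLE hd₁), hg']
    · show m₂' ≫ s₂.l ≫ c₁.ι.app d₂ = s₀.l ≫ c₁.ι.app d
      rw [← Category.assoc, hm₂l]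
      show (s₀.l ≫ F₁.map (homOfLE hd)) ≫ c₁.ι.app d₂ = _
      rw [Category.assoc, c₁.w (homOfLE hd)]
    · show m₂' ≫ s₂.r ≫ c₂.ι.app d₂ = s₀.r ≫ c₂.ι.app d
      rw [← Category.assoc, hm₂r]
      show (s₀.r ≫ F₂.map (homOfLE hd)) ≫ c₂.ι.app d₂ = _
      rw [Category.assoc, c₂.w (homOfLE hd)]
  · -- factorization
    intro G g hg hgen
    obtain ⟨d, g', hg'⟩ := (hgen D hD F₁ (fun f => m₁ f) c₁ hc₁).1 g
    have hg'm : Mono g' := by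
      haveI : Mono (g' ≫ c₁.ι.app d) := hg' ▸ hg
      exact mono_of_mono g' (c₁.ι.app d)
    have hgfm : Mono (g' ≫ η.app d) := by
      haveI := hg'm; haveI := mη d; infer_instance
    obtain ⟨T, hTd, -, hmemT⟩ := graph_mem hκ hC (hη d) g' hg'm hgen hgfm
    have hmem : MonoSpan.mk G g' (g' ≫ η.app d) hg'm hgfm ∈ Mg d :=
      mem_Mg d _ ⟨T, hTd, hmemT⟩ hgen
    refine ⟨L d _, ⟨d, _, hmem, rfl⟩, 𝟙 G, ?_, ?_⟩
    · show 𝟙 G ≫ g' ≫ c₁.ι.app d = g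
      rw [Category.id_comp, hg']
    · show 𝟙 G ≫ (g' ≫ η.app d) ≫ c₂.ι.app d = g ≫ hc₁.map c₂ η
      rw [Category.id_comp, Category.assoc, ← hc₁.ι_map c₂ η d, ← Category.assoc, hg']

end Aux4
section Aux5

variable {C : Type u} [Category.{v} C] {κ : Cardinal.{v}}

lemma leg_embedding (hκr : κ.IsRegular) (hC : LambdaMonoGenerated κ C)
    {D : Type v} [Preorder D] (hD : IsLambdaDirected κ D)
    (F : D ⥤ C) (hF : ∀ {d d' : D} (f : d ⟶ d'), IsLambdaEmbedding κ (F.map f))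
    (c : Cocone F) (hc : IsColimit c) (d : D) : IsLambdaEmbedding κ (c.ι.app d) := by
  have hκ : Cardinal.aleph0 ≤ κ := hκr.aleph0_le
  set D' := { e : D // d ≤ e } with hD'def
  have hD' : IsLambdaDirected κ D' := by
    intro s hs
    obtain ⟨b, hb⟩ := hD (insert d (Subtype.val '' s))
      (lt_of_le_of_lt (le_trans Cardinal.mk_insert_le
        (add_le_add_left Cardinal.mk_image_le 1))
        (Cardinal.add_lt_of_lt hκ hs (lt_of_lt_of_le Cardinal.one_lt_aleph0 hκ)))
    refine ⟨⟨b, hb d (Set.mem_insert _ _)⟩, fun x hx => ?_⟩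
    exact Subtype.coe_le_coe.1 (hb x.val (Set.mem_insert_of_mem _ ⟨x, hx, rfl⟩))
  let ι' : D' ⥤ D :=
    { obj := Subtype.val
      map := fun {e e'} f => homOfLE (Subtype.coe_le_coe.2 (leOfHom f))
      map_id := fun _ => Subsingleton.elim _ _
      map_comp := fun _ _ => Subsingleton.elim _ _ }
  let F' : D' ⥤ C := ι' ⋙ F
  let η' : (Functor.const D').obj (F.obj d) ⟶ F' :=
    { app := fun e => F.map (homOfLE e.2)
      naturality := by
        intro e e' f
        show 𝟙 (F.obj d) ≫ F.map (homOfLE e'.2) = F.map (homOfLE e.2) ≫ F.map (ι'.map f)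
        rw [Category.id_comp, ← F.map_comp]
        exact congrArg F.map (Subsingleton.elim _ _) }
  -- restricted cocone over F'
  let c₂' : Cocone F' :=
    { pt := c.pt
      ι := { app := fun e => c.ι.app e.val
             naturality := by
               intro e e' f
               exact (c.w (ι'.map f)).trans (Category.comp_id _).symm } }
  -- choice of upper bounds
  have bnd : ∀ e : D, ∃ b : D, e ≤ b ∧ d ≤ b := fun e => hD.pair hκ e d
  choose bf hb1 hb2 using bnd
  have indep : ∀ (s : Cocone F') (e : D) (b b' : D) (h : e ≤ b) (hdb : d ≤ b)
      (h' : e ≤ b') (hdb' : d ≤ b'),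
      F.map (homOfLE h) ≫ s.ι.app ⟨b, hdb⟩ = F.map (homOfLE h') ≫ s.ι.app ⟨b', hdb'⟩ := by
    intro s e b b' h hdb h' hdb'
    obtain ⟨z, hz1, hz2⟩ := hD.pair hκ b b'
    have w1 : F.map (homOfLE hz1) ≫ s.ι.app ⟨z, le_trans hdb hz1⟩ = s.ι.app ⟨b, hdb⟩ :=
      s.w (homOfLE (show (⟨b, hdb⟩ : D') ≤ ⟨z, le_trans hdb hz1⟩ from hz1))
    have w2 : F.map (homOfLE hz2) ≫ s.ι.app ⟨z, le_trans hdb hz1⟩ = s.ι.app ⟨b', hdb'⟩ :=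
      s.w (homOfLE (show (⟨b', hdb'⟩ : D') ≤ ⟨z, le_trans hdb hz1⟩ from hz2))
    rw [← w1, ← w2, ← Category.assoc, ← Category.assoc, ← F.map_comp, ← F.map_comp]
    have : homOfLE h ≫ homOfLE hz1 = homOfLE h' ≫ homOfLE hz2 := Subsingleton.elim _ _
    rw [this]
  let ext : Cocone F' → Cocone F := fun s =>
    { pt := s.pt
      ι := { app := fun e => F.map (homOfLE (hb1 e)) ≫ s.ι.app ⟨bf e, hb2 e⟩
             naturality := by
               intro e e' f
               have harr : f ≫ homOfLE (hb1 e') = homOfLE (le_trans (leOfHom f) (hb1 e')) :=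
                 Subsingleton.elim _ _
               have big : F.map f ≫ F.map (homOfLE (hb1 e')) ≫ s.ι.app ⟨bf e', hb2 e'⟩ =
                   F.map (homOfLE (hb1 e)) ≫ s.ι.app ⟨bf e, hb2 e⟩ := by
                 rw [← Category.assoc, ← F.map_comp, harr]
                 exact indep s e _ _ _ _ _ _
               exact big.trans (Category.comp_id _).symm } }
  have hc₂' : IsColimit c₂' :=
    { desc := fun s => hc.desc (ext s)
      fac := fun s j => by
        show c.ι.app j.val ≫ hc.desc (ext s) = s.ι.app j
        rw [hc.fac (ext s) j.val]
        exact s.w (homOfLE (show j ≤ ⟨bf j.val, hb2 j.val⟩ from hb1 j.val))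
      uniq := fun s m hm => by
        refine hc.uniq (ext s) m (fun e => ?_)
        show c.ι.app e ≫ m = F.map (homOfLE (hb1 e)) ≫ s.ι.app ⟨bf e, hb2 e⟩
        rw [← c.w (homOfLE (hb1 e)), Category.assoc]
        congr 1
        exact hm ⟨bf e, hb2 e⟩ }
  -- the constant cocone is a colimit
  have bd' : ∀ x y : D', ∃ z, x ≤ z ∧ y ≤ z := fun x y => hD'.pair hκ x y
  have hc₁' : IsColimit (_root_.constCocone D' (F.obj d)) := constIsColimit ⟨d, le_refl d⟩ bd'
  have main := colimit_map_embedding hκr hC hD' ((Functor.const D').obj (F.obj d)) F'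
    (fun {e e'} f => by
      rw [Functor.const_obj_map]
      exact id_embedding hκ hC _)
    (fun {e e'} f => hF (ι'.map f)) η' (fun e => hF (homOfLE e.2))
    (_root_.constCocone D' (F.obj d)) hc₁' c₂' hc₂'
  have key : c.ι.app d = hc₁'.map c₂' η' := by
    have h := hc₁'.ι_map c₂' η' ⟨d, le_refl d⟩
    have l1 : (_root_.constCocone D' (F.obj d)).ι.app ⟨d, le_refl d⟩ ≫ hc₁'.map c₂' η' =
        hc₁'.map c₂' η' := Category.id_comp _
    have l2 : η'.app ⟨d, le_refl d⟩ ≫ c₂'.ι.app ⟨d, le_refl d⟩ = c.ι.app d := by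
      have e0 : η'.app ⟨d, le_refl d⟩ ≫ c₂'.ι.app ⟨d, le_refl d⟩ =
          F.map (𝟙 d) ≫ c.ι.app d := rfl
      rw [e0, F.map_id, Category.id_comp]
    rw [← l1, h, l2]
  rw [key]
  exact main

end Aux5
theorem statement19 {C : Type u} [Category.{v} C] (κ : Cardinal.{v}) (hκ : κ.IsRegular)
    (hC : LambdaMonoGenerated κ C) :
    (∀ (D : Type v) [Preorder D], IsLambdaDirected κ D →
      ∀ (F₁ F₂ : D ⥤ C),
        (∀ {d d' : D} (f : d ⟶ d'), IsLambdaEmbedding κ (F₁.map f)) →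
        (∀ {d d' : D} (f : d ⟶ d'), IsLambdaEmbedding κ (F₂.map f)) →
        ∀ (η : F₁ ⟶ F₂), (∀ d : D, IsLambdaEmbedding κ (η.app d)) →
        ∀ (c₁ : Cocone F₁) (hc₁ : IsColimit c₁) (c₂ : Cocone F₂), IsColimit c₂ →
          IsLambdaEmbedding κ (hc₁.map c₂ η)) ∧
    (∀ (D : Type v) [Preorder D], IsLambdaDirected κ D →
      ∀ (F : D ⥤ C), (∀ {d d' : D} (f : d ⟶ d'), IsLambdaEmbedding κ (F.map f)) →
      ∀ (c : Cocone F), IsColimit c → ∀ d : D, IsLambdaEmbedding κ (c.ι.app d)) ∧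
    ((∀ (D : Type v) [Preorder D], IsLambdaDirected κ D →
        ∀ (F : D ⥤ C), (∀ {d d' : D} (f : d ⟶ d'), Mono (F.map f)) →
          ∃ c : Cocone F, Nonempty (IsColimit c)) →
      ∀ (D : Type v) [Preorder D], IsLambdaDirected κ D →
      ∀ (F : D ⥤ C), (∀ {d d' : D} (f : d ⟶ d'), IsLambdaEmbedding κ (F.map f)) →
        ∃ (c : Cocone F) (hc : IsColimit c),
          (∀ d : D, IsLambdaEmbedding κ (c.ι.app d)) ∧
          ∀ c' : Cocone F, (∀ d : D, IsLambdaEmbedding κ (c'.ι.app d)) →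
            IsLambdaEmbedding κ (hc.desc c')) := by
  have hκ0 : Cardinal.aleph0 ≤ κ := hκ.aleph0_le
  refine ⟨?_, ?_, ?_⟩
  · intro D _ hD F₁ F₂ h₁ h₂ η hη c₁ hc₁ c₂ hc₂
    exact colimit_map_embedding hκ hC hD F₁ F₂ (fun f => h₁ f) (fun f => h₂ f) η hη c₁ hc₁ c₂ hc₂
  · intro D _ hD F hF c hc d
    exact leg_embedding hκ hC hD F (fun f => hF f) c hc d
  · intro hex D _ hD F hF
    have monoF : ∀ {d d' : D} (f : d ⟶ d'), Mono (F.map f) :=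
      fun f => embedding_mono hκ0 hC (hF f)
    obtain ⟨c, ⟨hc⟩⟩ := hex D hD F (fun f => monoF f)
    refine ⟨c, hc, fun d => leg_embedding hκ hC hD F (fun f => hF f) c hc d, ?_⟩
    intro c' hlegs
    obtain ⟨d₀⟩ := hD.nonempty' hκ0
    have bd : ∀ x y : D, ∃ z, x ≤ z ∧ y ≤ z := fun x y => hD.pair hκ0 x y
    have hc₂ : IsColimit (_root_.constCocone D c'.pt) := constIsColimit d₀ bd
    have main := colimit_map_embedding hκ hC hD F ((Functor.const D).obj c'.pt)
      (fun f => hF f)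
      (fun {e e'} f => by
        have : ((Functor.const D).obj c'.pt).map f = 𝟙 c'.pt := rfl
        rw [this]
        exact id_embedding hκ0 hC _)
      c'.ι hlegs c hc (_root_.constCocone D c'.pt) hc₂
    have key : hc.desc c' = hc.map (_root_.constCocone D c'.pt) c'.ι := by
      refine hc.hom_ext (fun j => ?_)
      rw [hc.fac]
      exact (Category.comp_id _).symm.trans (hc.ι_map (_root_.constCocone D c'.pt) c'.ι j).symm
    rw [key]
    exact main
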